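/- Let A be a commutative ring and let f, g ∈ A⟦t⟧ be formal power series with zero constant coefficient, with coefficients f_k = coeff_k f and g_k = coeff_k g. Then for every n ≥ 1, the n-th coefficient of the composition f ∘ g (substitution of g into f) equals Σ_{m=1}^{n} Σ (m!/(k_1!·k_2!···k_n!)) · f_m · g_1^{k_1} · g_2^{k_2} ··· g_n^{k_n}, where the inner sum runs over all tuples (k_1,…,k_n) of non-negative integers with k_1 + ⋯ + k_n = m and k_1 + 2k_2 + ⋯ + n·k_n = n. -/

import Mathlib

/-!
As `g₀ = 0`, only `g₁, …, gₙ` influence the `n`-th coefficient of a power of `g`, so `gᵐ` may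
be replaced there by `(g₁ t + ⋯ + gₙ tⁿ)ᵐ`. The multinomial theorem expands this power as
`∑ m!/(k₁!⋯kₙ!) g₁^{k₁}⋯gₙ^{kₙ} t^{k₁ + 2k₂ + ⋯ + nkₙ}` over `k₁ + ⋯ + kₙ = m`, and reading off
the coefficient of `tⁿ` gives the formula; the term `m = 0` of the composition drops out since
`f₀ = 0`.
-/

open scoped Nat

/-- Composition (substitution) of formal power series: `psComp f g` is the
series obtained by substituting `g` into `f`, defined coefficientwise by
`coeff n (f ∘ g) = ∑_{m ≤ n} f_m · coeff n (gᵐ)`. When `g` has zero constant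
coefficient this is the usual substitution. -/
noncomputable def psComp {A : Type*} [CommRing A] (f g : PowerSeries A) :
    PowerSeries A :=
  PowerSeries.mk fun n : ℕ =>
    ∑ m ∈ Finset.range (n + 1),
      PowerSeries.coeff m f * PowerSeries.coeff n (g ^ m)

open Finset PowerSeries

namespace PowerSeries

variable {A : Type*} [CommRing A]

theorem coeff_pow_eq_of_coeff_eq {g h : A⟦X⟧} {n : ℕ}
    (hgh : ∀ p ≤ n, coeff p g = coeff p h) (m : ℕ) :
    coeff n (g ^ m) = coeff n (h ^ m) := by
  have hdvd : (X : A⟦X⟧) ^ (n + 1) ∣ g ^ m - h ^ m :=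
    (X_pow_dvd_iff.mpr fun p hp => by rw [map_sub, hgh p (by omega), sub_self]).trans
      (sub_dvd_pow_sub_pow g h m)
  exact sub_eq_zero.mp (by simpa using X_pow_dvd_iff.mp hdvd n n.lt_succ_self)

theorem coeff_sum_C_mul_X_pow_pow {ι : Type*} [Fintype ι] [DecidableEq ι] (a : ι → A)
    (w : ι → ℕ) (n m : ℕ) :
    coeff n ((∑ i, C (a i) * X ^ w i) ^ m) =
      ∑ k ∈ (piAntidiag univ m).filter (fun k => ∑ i, w i * k i = n),
        (Nat.multinomial univ k : A) * ∏ i, a i ^ k i := by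
  have hterm : ∀ k : ι → ℕ, ∏ i, (C (a i) * X ^ w i) ^ k i =
      C (∏ i, a i ^ k i) * (X : A⟦X⟧) ^ (∑ i, w i * k i) := by
    intro k
    simp only [mul_pow, prod_mul_distrib, map_prod, map_pow, ← pow_mul, prod_pow_eq_pow_sum]
  rw [sum_pow_eq_sum_piAntidiag, map_sum, sum_filter]
  refine sum_congr rfl fun k _ => ?_
  rw [hterm, ← map_natCast (C (R := A)), ← mul_assoc, ← map_mul, coeff_C_mul_X_pow]
  simp only [eq_comm]

theorem coeff_sum_C_coeff_mul_X_pow_of_le {g : A⟦X⟧} (hg : constantCoeff g = 0)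
    {n p : ℕ} (hp : p ≤ n) :
    coeff p (∑ i : Fin n, C (coeff (i.1 + 1) g) * X ^ (i.1 + 1)) = coeff p g := by
  simp only [map_sum, coeff_C_mul_X_pow]
  cases p with
  | zero => simp [hg]
  | succ j =>
    rw [Fin.sum_univ_eq_sum_range (fun i => if j + 1 = i + 1 then coeff (i + 1) g else 0)]
    simp [Nat.lt_of_succ_le hp]

theorem coeff_pow_eq_sum_multinomial {g : A⟦X⟧} (hg : constantCoeff g = 0) (n m : ℕ) :
    coeff n (g ^ m) =
      ∑ k ∈ (piAntidiag univ m).filter (fun k : Fin n → ℕ => ∑ i, (i.1 + 1) * k i = n),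
        (Nat.multinomial univ k : A) * ∏ i, coeff (i.1 + 1) g ^ k i := by
  rw [coeff_pow_eq_of_coeff_eq (fun p hp => (coeff_sum_C_coeff_mul_X_pow_of_le hg hp).symm),
    coeff_sum_C_mul_X_pow_pow]

end PowerSeries

theorem Finset.filter_piAntidiag_eq_filter_piFinset (n m : ℕ) :
    (piAntidiag univ m).filter (fun k : Fin n → ℕ => ∑ i, (i.1 + 1) * k i = n) =
      (Fintype.piFinset fun _ : Fin n => range (n + 1)).filter
        (fun k => ∑ i, k i = m ∧ ∑ i, (i.1 + 1) * k i = n) := by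
  ext k
  simp only [mem_filter, mem_piAntidiag, Fintype.mem_piFinset, mem_range, mem_univ,
    implies_true, and_true]
  refine ⟨fun ⟨hm, hn⟩ => ⟨fun i => Nat.lt_succ_of_le ?_, hm, hn⟩, fun h => h.2⟩
  calc k i ≤ (i.1 + 1) * k i := Nat.le_mul_of_pos_left _ i.1.succ_pos
    _ ≤ ∑ j, (j.1 + 1) * k j :=
      single_le_sum (f := fun j : Fin n => (j.1 + 1) * k j) (fun j _ => Nat.zero_le _) (mem_univ i)
    _ = n := hn

theorem coeff_psComp_faa_di_bruno_general {A : Type*} [CommRing A]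
    (f g : PowerSeries A)
    (hf : PowerSeries.constantCoeff f = 0)
    (hg : PowerSeries.constantCoeff g = 0)
    (n : ℕ) :
    PowerSeries.coeff n (psComp f g) =
      ∑ m ∈ Finset.Icc 1 n,
        ∑ k ∈ (Fintype.piFinset fun _ : Fin n => Finset.range (n + 1)).filter
            (fun k : Fin n → ℕ =>
              (∑ i, k i) = m ∧ (∑ i, (i.1 + 1) * k i) = n),
          ((m ! / ∏ i : Fin n, (k i)! : ℕ) : A) * PowerSeries.coeff m f *
            ∏ i : Fin n, (PowerSeries.coeff (i.1 + 1) g) ^ (k i) := by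
  rw [psComp, coeff_mk, sum_range_eq_add_Ico _ n.add_one_pos,
    Ico_add_one_right_eq_Icc, coeff_zero_eq_constantCoeff_apply, hf, zero_mul, zero_add]
  refine sum_congr rfl fun m _ => ?_
  rw [coeff_pow_eq_sum_multinomial hg, mul_sum, ← filter_piAntidiag_eq_filter_piFinset]
  refine sum_congr rfl fun k hk => ?_
  rw [Nat.multinomial, (mem_piAntidiag.mp (mem_filter.mp hk).1).1]
  ring

/-- **Faà di Bruno's formula for formal power series.** If `f, g ∈ A⟦t⟧` have
zero constant coefficient, then for `n ≥ 1` the `n`-th coefficient of the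
composition `f ∘ g` is
`∑_{m=1}^n ∑ (m!/(k₁!⋯kₙ!)) f_m g₁^{k₁} ⋯ gₙ^{kₙ}`, the inner sum over
tuples `(k₁,…,kₙ)` with `∑ kᵢ = m` and `∑ i·kᵢ = n` (all such tuples have
`kᵢ ≤ n`, hence lie in the finite box used below; the multinomial coefficient
`m!/(k₁!⋯kₙ!)` is a natural number; `k i` stands for `k_{i+1}`). -/
theorem coeff_psComp_faa_di_bruno {A : Type*} [CommRing A]
    (f g : PowerSeries A)
    (hf : PowerSeries.constantCoeff f = 0)
    (hg : PowerSeries.constantCoeff g = 0)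
    (n : ℕ) (hn : 1 ≤ n) :
    PowerSeries.coeff n (psComp f g) =
      ∑ m ∈ Finset.Icc 1 n,
        ∑ k ∈ (Fintype.piFinset fun _ : Fin n => Finset.range (n + 1)).filter
            (fun k : Fin n → ℕ =>
              (∑ i, k i) = m ∧ (∑ i, (i.1 + 1) * k i) = n),
          ((m ! / ∏ i : Fin n, (k i)! : ℕ) : A) * PowerSeries.coeff m f *
            ∏ i : Fin n, (PowerSeries.coeff (i.1 + 1) g) ^ (k i) :=
  coeff_psComp_faa_di_bruno_general f g hf hg n
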